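/- Let V be a subspace of K⟨G⟩. Then the quotient K⟨G⟩/V is isomorphic as a K-vector space to the span of the set of elements of G that are not leading terms of nonzero elements of V, i.e. K⟨G⟩/V ≅ K⟨{g ∈ G : g ∉ lt(V)}⟩. -/

import Mathlib

open Finsupp

variable {K G : Type*} [Field K] [LinearOrder G] [WellFoundedLT G]

/-!
Call `g` a leading term of `V` if it is the largest element of the support of some nonzero
`v ∈ V`, and let `S` be the set of the other elements of `G`. No nonzero vector supported on `S`
lies in `V`, since its leading term would be in `S`. Conversely every `g` is the leading term of
some element of `V ⊔ K⟨S⟩` (of a vector of `V`, or of `single g 1`), so Gaussian elimination of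
leading terms, by well-founded induction on the leading term, shows `V ⊔ K⟨S⟩ = ⊤`. Hence
`K⟨S⟩` is a complement of `V`, and thus isomorphic to the quotient.
-/

namespace Finsupp

section LeadingTerm

variable {R M : Type*} {ι : Type*} [LinearOrder ι]

theorem support_max_lt_of_apply_eq_zero [Zero M] {f : ι →₀ M} {i : ι} (hfi : f i = 0)
    (hle : f.support.max ≤ i) : f.support.max < i :=
  hle.lt_of_ne fun h => mem_support_iff.mp (Finset.mem_of_max h) hfi

theorem support_max_single_one [Zero R] [One R] [NeZero (1 : R)] (i : ι) :
    (single i (1 : R)).support.max = i := by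
  rw [support_single i one_ne_zero, Finset.max_singleton]

theorem support_max_sub_smul_lt [DivisionRing R] {f u : ι →₀ R} {i : ι}
    (hf : f.support.max ≤ i) (hu : u.support.max = i) :
    (f - (f i / u i) • u).support.max < i := by
  have hui : u i ≠ 0 := mem_support_iff.mp (Finset.mem_of_max hu)
  apply support_max_lt_of_apply_eq_zero
  · simp [div_mul_cancel₀ _ hui]
  · calc (f - (f i / u i) • u).support.max
        ≤ (f.support ∪ u.support).max :=
          Finset.max_mono (support_sub.trans (Finset.union_subset_union le_rfl support_smul))
      _ = f.support.max ⊔ u.support.max := Finset.max_union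
      _ ≤ i := sup_le hf hu.le

theorem _root_.Submodule.eq_top_of_forall_exists_support_max_eq [DivisionRing R]
    [WellFoundedLT ι] {U : Submodule R (ι →₀ R)} (hU : ∀ i : ι, ∃ u ∈ U, u.support.max = i) :
    U = ⊤ := by
  suffices key : ∀ b : WithBot ι, ∀ f : ι →₀ R, f.support.max = b → f ∈ U from
    eq_top_iff.mpr fun f _ => key _ f rfl
  intro b
  induction b using WellFoundedLT.induction with
  | _ b ih =>
  intro f hf
  cases b with
  | bot =>
    rw [Finset.max_eq_bot, support_eq_empty] at hf
    exact hf ▸ U.zero_mem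
  | coe i =>
    obtain ⟨u, hu, hui⟩ := hU i
    have hlt := support_max_sub_smul_lt hf.le hui
    rw [← sub_add_cancel f ((f i / u i) • u)]
    exact U.add_mem (ih _ hlt _ rfl) (U.smul_mem _ hu)

end LeadingTerm

/-- The set `lt(V)` of leading terms of nonzero elements of `V`. -/
def leadingTerms {R ι : Type*} [Semiring R] [LinearOrder ι] (V : Submodule R (ι →₀ R)) :
    Set ι :=
  {i | ∃ v ∈ V, v ≠ 0 ∧ v.support.max = i}

variable {R ι : Type*} [DivisionRing R] [LinearOrder ι]

theorem disjoint_supported_compl_leadingTerms (V : Submodule R (ι →₀ R)) :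
    Disjoint V (supported R R (leadingTerms V)ᶜ) := by
  refine Submodule.disjoint_def.mpr fun v hv hvS => by_contra fun hv0 => ?_
  obtain ⟨i, hi⟩ := Finset.max_of_nonempty (support_nonempty_iff.mpr hv0)
  exact (mem_supported R v).mp hvS (Finset.mem_of_max hi) ⟨v, hv, hv0, hi⟩

theorem isCompl_supported_compl_leadingTerms [WellFoundedLT ι] (V : Submodule R (ι →₀ R)) :
    IsCompl V (supported R R (leadingTerms V)ᶜ) := by
  refine ⟨disjoint_supported_compl_leadingTerms V, codisjoint_iff.mpr ?_⟩
  refine Submodule.eq_top_of_forall_exists_support_max_eq fun i => ?_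
  by_cases hi : i ∈ leadingTerms V
  · obtain ⟨v, hv, -, hvi⟩ := hi
    exact ⟨v, Submodule.mem_sup_left hv, hvi⟩
  · refine ⟨single i 1, Submodule.mem_sup_right ?_, support_max_single_one i⟩
    exact single_mem_supported R 1 hi

end Finsupp

/-- The quotient `K⟨G⟩/V` is isomorphic to the span of the elements of `G` that are not
leading terms of nonzero elements of `V`. -/
theorem quotient_iso_span_non_leading_terms (V : Submodule K (G →₀ K)) :
    Nonempty (((G →₀ K) ⧸ V) ≃ₗ[K]
      ↥(Submodule.span K ((fun g => single g (1 : K)) ''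
        {g : G | ¬ ∃ v ∈ V, v ≠ 0 ∧ v.support.max = (g : WithBot G)}))) := by
  change Nonempty (_ ≃ₗ[K] ↥(Submodule.span K
    ((fun g => single g (1 : K)) '' (leadingTerms V)ᶜ)))
  rw [← supported_eq_span_single]
  exact ⟨Submodule.quotientEquivOfIsCompl V _ (isCompl_supported_compl_leadingTerms V)⟩
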